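/- arXiv:2406.07985 — 3 statements merged into one kernel-verified Lean document; each statement's English description precedes it below -/
import Mathlib

section
/- Let α > 0, μ < 0, p > 2. There exists s > 0 with (α/2) s² (log s² − 1) + (μ/p) s^p > 0 if and only if μ > −(αp/(p−2))·e^{−p/2}. -/
/-! For `s > 0` the nonlinearity factors as `s² · g(s^(p-2))` with
`g t = α/(p-2) · log t - (-μ/p) · t - α/2`. The concave function `a log t - c t` attains its
maximum `a log (a/c) - a` at `t = a/c` (this is `log x ≤ x - 1`), so positivity somewhere
amounts to `log (αp / ((p-2)(-μ))) > p/2`, which unwinds to the stated bound on `μ`. -/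

open Real

namespace Real

theorem mul_log_sub_mul_le {a c t : ℝ} (ha : 0 < a) (hc : 0 < c) (ht : 0 < t) :
    a * log t - c * t ≤ a * log (a / c) - a := by
  have hu : 0 < c * t / a := by positivity
  have key : log (c * t / a) ≤ c * t / a - 1 := log_le_sub_one_of_pos hu
  rw [log_div (mul_pos hc ht).ne' ha.ne', log_mul hc.ne' ht.ne'] at key
  rw [log_div ha.ne' hc.ne']
  have : a * (c * t / a) = c * t := by field_simp
  linarith [mul_le_mul_of_nonneg_left key ha.le]

theorem exists_lt_mul_log_sub_mul_iff {a b c : ℝ} (ha : 0 < a) (hc : 0 < c) :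
    (∃ t, 0 < t ∧ b < a * log t - c * t) ↔ b < a * log (a / c) - a := by
  constructor
  · rintro ⟨t, ht, hb⟩
    exact hb.trans_le (mul_log_sub_mul_le ha hc ht)
  · intro hb
    refine ⟨a / c, by positivity, ?_⟩
    rwa [mul_div_cancel₀ a hc.ne']

theorem exists_pos_rpow_iff {q : ℝ} (hq : q ≠ 0) (P : ℝ → Prop) :
    (∃ s, 0 < s ∧ P (s ^ q)) ↔ ∃ t, 0 < t ∧ P t := by
  constructor
  · rintro ⟨s, hs, h⟩
    exact ⟨s ^ q, rpow_pos_of_pos hs q, h⟩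
  · rintro ⟨t, ht, h⟩
    refine ⟨t ^ q⁻¹, rpow_pos_of_pos ht _, ?_⟩
    rwa [← rpow_mul ht.le, inv_mul_cancel₀ hq, rpow_one]

end Real

theorem logNonlinearity_eq_sq_mul {α μ p s : ℝ} (hp : p ≠ 2) (hs : 0 < s) :
    α / 2 * s ^ 2 * (log (s ^ 2) - 1) + μ / p * s ^ p =
      s ^ 2 * (α / (p - 2) * log (s ^ (p - 2)) - -μ / p * s ^ (p - 2) - α / 2) := by
  have hq : p - 2 ≠ 0 := sub_ne_zero.mpr hp
  have hpow : s ^ p = s ^ 2 * s ^ (p - 2) := by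
    rw [← rpow_natCast, ← rpow_add hs]
    norm_num
  rw [log_pow, log_rpow hs, hpow]
  field_simp
  push_cast
  ring

theorem neg_mul_exp_neg_lt_iff {M μ x : ℝ} (hμ : μ < 0) :
    -M * exp (-x) < μ ↔ exp x < M / -μ := by
  rw [lt_div_iff₀ (neg_pos.mpr hμ), exp_neg, neg_mul, neg_lt, ← div_eq_mul_inv,
    lt_div_iff₀ (exp_pos x), mul_comm]

/-- For `α > 0`, `μ < 0`, `p > 2`: there exists `s > 0` with
`(α/2)s²(log s² − 1) + (μ/p)s^p > 0` iff `μ > −(αp/(p−2))·e^(−p/2)`. -/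
theorem stmt_9 (α μ p : ℝ) (hα : 0 < α) (hμ : μ < 0) (hp : 2 < p) :
    (∃ s : ℝ, 0 < s ∧
        0 < α / 2 * s ^ 2 * (Real.log (s ^ 2) - 1) + μ / p * s ^ p) ↔
      -(α * p / (p - 2)) * Real.exp (-p / 2) < μ := by
  have hq : 0 < p - 2 := sub_pos.mpr hp
  have ha : 0 < α / (p - 2) := div_pos hα hq
  have hc : 0 < -μ / p := div_pos (neg_pos.mpr hμ) (by linarith)
  have hK : α / (p - 2) / (-μ / p) = α * p / (p - 2) / -μ := by
    field_simp
  have hKpos : 0 < α * p / (p - 2) / -μ := hK ▸ div_pos ha hc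
  calc (∃ s : ℝ, 0 < s ∧ 0 < α / 2 * s ^ 2 * (log (s ^ 2) - 1) + μ / p * s ^ p)
      ↔ ∃ s : ℝ, 0 < s ∧
          α / 2 < α / (p - 2) * log (s ^ (p - 2)) - -μ / p * s ^ (p - 2) := by
        refine exists_congr fun s => and_congr_right fun hs => ?_
        rw [logNonlinearity_eq_sq_mul hp.ne' hs, mul_pos_iff_of_pos_left (by positivity),
          sub_pos]
    _ ↔ ∃ t : ℝ, 0 < t ∧ α / 2 < α / (p - 2) * log t - -μ / p * t :=
        exists_pos_rpow_iff hq.ne' fun t => α / 2 < α / (p - 2) * log t - -μ / p * t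
    _ ↔ α / 2 < α / (p - 2) * log (α * p / (p - 2) / -μ) - α / (p - 2) := by
        rw [exists_lt_mul_log_sub_mul_iff ha hc, hK]
    _ ↔ p / 2 < log (α * p / (p - 2) / -μ) := by
        have h : α / (p - 2) * log (α * p / (p - 2) / -μ) - α / (p - 2) - α / 2 =
            α / (p - 2) * (log (α * p / (p - 2) / -μ) - p / 2) := by
          field_simp
          ring
        rw [← sub_pos, h, mul_pos_iff_of_pos_left ha, sub_pos]
    _ ↔ -(α * p / (p - 2)) * exp (-p / 2) < μ := by
        rw [lt_log_iff_exp_lt hKpos, neg_div, neg_mul_exp_neg_lt_iff hμ]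
end

section
/- Let m : (0,∞) → ℝ be a function such that m(√(c₁² + c₂²)) ≤ m(c₁) + m(c₂) for all c₁, c₂ > 0, and such that m(√s · c) ≤ s·m(c) for all s ≥ 1 and c > 0, with strict inequality m(√s · c₁) < s·m(c₁) for some fixed c₁ > 0 and all s > 1. Then for all c₂ > 0, m(√(c₁² + c₂²)) < m(c₁) + m(c₂). -/
/-!
Write `r = √(c₁² + c₂²)`. In the form `a² m(b) ≤ b² m(a)` for `0 < a ≤ b`, the scaling inequality
compares `m` at two radii, strictly when `a = c₁ < b`. If `c₂ ≤ c₁`, compare `r` with `c₁`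
strictly and `c₁` with `c₂`; if `c₁ < c₂`, compare `r` with `c₂` and `c₂` with `c₁` strictly.
-/

lemma sqrt_div_sq_mul_self {a b : ℝ} (ha : 0 < a) (hb : 0 ≤ b) :
    Real.sqrt (b ^ 2 / a ^ 2) * a = b := by
  rw [Real.sqrt_div' _ (sq_nonneg a), Real.sqrt_sq hb, Real.sqrt_sq ha.le,
    div_mul_cancel₀ _ ha.ne']

lemma sq_mul_le_sq_mul_of_scaling {m : ℝ → ℝ}
    (hscale : ∀ s c : ℝ, 1 ≤ s → 0 < c → m (Real.sqrt s * c) ≤ s * m c)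
    {a b : ℝ} (ha : 0 < a) (hab : a ≤ b) : a ^ 2 * m b ≤ b ^ 2 * m a := by
  have hs : 1 ≤ b ^ 2 / a ^ 2 := by
    rw [one_le_div (by positivity)]
    exact pow_le_pow_left₀ ha.le hab 2
  have h := hscale _ a hs ha
  rw [sqrt_div_sq_mul_self ha (ha.le.trans hab), div_mul_eq_mul_div,
    le_div_iff₀ (by positivity)] at h
  linarith

lemma sq_mul_lt_sq_mul_of_scaling {m : ℝ → ℝ} {a : ℝ}
    (hstrict : ∀ s : ℝ, 1 < s → m (Real.sqrt s * a) < s * m a)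
    (ha : 0 < a) {b : ℝ} (hab : a < b) : a ^ 2 * m b < b ^ 2 * m a := by
  have hs : 1 < b ^ 2 / a ^ 2 := by
    rw [one_lt_div (by positivity)]
    exact pow_lt_pow_left₀ hab ha.le two_ne_zero
  have h := hstrict _ hs
  rw [sqrt_div_sq_mul_self ha (ha.le.trans hab.le), div_mul_eq_mul_div,
    lt_div_iff₀ (by positivity)] at h
  linarith

theorem stmt_12_general (m : ℝ → ℝ)
    (hscale : ∀ s c : ℝ, 1 ≤ s → 0 < c → m (Real.sqrt s * c) ≤ s * m c)
    (c₁ : ℝ) (hc₁ : 0 < c₁)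
    (hstrict : ∀ s : ℝ, 1 < s → m (Real.sqrt s * c₁) < s * m c₁) :
    ∀ c₂ : ℝ, 0 < c₂ → m (Real.sqrt (c₁ ^ 2 + c₂ ^ 2)) < m c₁ + m c₂ := by
  intro c₂ hc₂
  set r := Real.sqrt (c₁ ^ 2 + c₂ ^ 2)
  have hr : r ^ 2 = c₁ ^ 2 + c₂ ^ 2 := Real.sq_sqrt (by positivity)
  have hc₁r : c₁ < r := Real.lt_sqrt_of_sq_lt (by nlinarith)
  have hc₂r : c₂ < r := Real.lt_sqrt_of_sq_lt (by nlinarith)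
  rcases le_or_gt c₂ c₁ with hle | hlt
  · have h_r := sq_mul_lt_sq_mul_of_scaling hstrict hc₁ hc₁r
    have h_c₁ := sq_mul_le_sq_mul_of_scaling hscale hc₂ hle
    rw [hr] at h_r
    have : c₁ ^ 2 * m r < c₁ ^ 2 * (m c₁ + m c₂) := by linarith
    exact lt_of_mul_lt_mul_left this (by positivity)
  · have h_r := sq_mul_le_sq_mul_of_scaling hscale hc₂ hc₂r.le
    have h_c₂ := sq_mul_lt_sq_mul_of_scaling hstrict hc₁ hlt
    rw [hr] at h_r
    have : c₂ ^ 2 * m r < c₂ ^ 2 * (m c₁ + m c₂) := by linarith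
    exact lt_of_mul_lt_mul_left this (by positivity)

/-- Strict sub-additivity: if `m(√(c₁²+c₂²)) ≤ m(c₁)+m(c₂)`, `m(√s·c) ≤ s·m(c)` for
`s ≥ 1`, and `m(√s·c₁) < s·m(c₁)` for all `s > 1` at some fixed `c₁ > 0`, then
`m(√(c₁²+c₂²)) < m(c₁)+m(c₂)` for all `c₂ > 0`. -/
theorem stmt_12 (m : ℝ → ℝ)
    (hsub : ∀ c₁ c₂ : ℝ, 0 < c₁ → 0 < c₂ →
      m (Real.sqrt (c₁ ^ 2 + c₂ ^ 2)) ≤ m c₁ + m c₂)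
    (hscale : ∀ s c : ℝ, 1 ≤ s → 0 < c → m (Real.sqrt s * c) ≤ s * m c)
    (c₁ : ℝ) (hc₁ : 0 < c₁)
    (hstrict : ∀ s : ℝ, 1 < s → m (Real.sqrt s * c₁) < s * m c₁) :
    ∀ c₂ : ℝ, 0 < c₂ → m (Real.sqrt (c₁ ^ 2 + c₂ ^ 2)) < m c₁ + m c₂ :=
  stmt_12_general m hscale c₁ hc₁ hstrict
end

section
/- Let N ≥ 2 and define the function u : ℝ^N → ℝ by u(x) = (|x|^{N/2} log|x|)^{−1} for |x| ≥ 3 and u(x) = 0 for |x| ≤ 2 (extended smoothly in between, with u smooth and bounded with bounded gradient on the annulus 2 ≤ |x| ≤ 3). Then ∫_{ℝ^N} u(x)² log(u(x)²) dx = −∞, i.e. the negative part of u² log u² is not integrable. -/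
open MeasureTheory
open scoped ENNReal NNReal

section Aux

/-- Key pointwise inequality on the annulus. -/
lemma stmt13_pointwise (N : ℕ) (hN : 2 ≤ N) {r : ℝ} (k : ℕ)
    (h1 : Real.exp (k + 2) ≤ r) (h2 : r < Real.exp (k + 3)) :
    (N : ℝ) / (Real.exp (k + 3) ^ N * (k + 3)) ≤
      -((r ^ ((N : ℝ) / 2) * Real.log r)⁻¹ ^ 2 *
        Real.log ((r ^ ((N : ℝ) / 2) * Real.log r)⁻¹ ^ 2)) := by
  have hr3 : (3 : ℝ) ≤ r := by
    refine le_trans ?_ h1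
    calc (3 : ℝ) = 2 + 1 := by norm_num
    _ ≤ Real.exp 2 := Real.add_one_le_exp 2
    _ ≤ Real.exp (k + 2) := by
        apply Real.exp_le_exp.2; push_cast; linarith [Nat.cast_nonneg (α := ℝ) k]
  have hr0 : (0 : ℝ) < r := by linarith
  have hlog1 : (1 : ℝ) ≤ Real.log r := by
    rw [← Real.log_exp 1]
    exact Real.log_le_log (Real.exp_pos 1) (le_trans (Real.exp_one_lt_d9.le.trans (by norm_num)) hr3)
  have hlogpos : 0 < Real.log r := lt_of_lt_of_le one_pos hlog1
  have hrpow : (r ^ ((N : ℝ) / 2)) ^ 2 = r ^ (N : ℕ) := by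
    rw [← Real.rpow_natCast (r ^ ((N : ℝ) / 2)) 2, ← Real.rpow_mul hr0.le,
      ← Real.rpow_natCast r N]
    norm_num
  have hsq : ((r ^ ((N : ℝ) / 2) * Real.log r)⁻¹) ^ 2 = (r ^ N * Real.log r ^ 2)⁻¹ := by
    rw [inv_pow, mul_pow, hrpow]
  have hrN : (0 : ℝ) < r ^ N := pow_pos hr0 N
  have hlog : Real.log ((r ^ N * Real.log r ^ 2)⁻¹) =
      -((N : ℝ) * Real.log r + 2 * Real.log (Real.log r)) := by
    rw [Real.log_inv, Real.log_mul (ne_of_gt hrN) (by positivity), Real.log_pow, Real.log_pow]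
    push_cast; ring
  rw [hsq, hlog]
  have hloglog : 0 ≤ Real.log (Real.log r) := Real.log_nonneg hlog1
  have hN0 : (0 : ℝ) < N := by positivity
  have key : (N : ℝ) / (r ^ N * Real.log r) ≤
      -((r ^ N * Real.log r ^ 2)⁻¹ * -((N : ℝ) * Real.log r + 2 * Real.log (Real.log r))) := by
    have h : -((r ^ N * Real.log r ^ 2)⁻¹ * -((N : ℝ) * Real.log r + 2 * Real.log (Real.log r)))
        = ((N : ℝ) * Real.log r + 2 * Real.log (Real.log r)) / (r ^ N * Real.log r ^ 2) := by
      ring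
    rw [h]
    have heq : (N : ℝ) / (r ^ N * Real.log r) =
        ((N : ℝ) * Real.log r) / (r ^ N * Real.log r ^ 2) := by
      field_simp
    rw [heq]
    apply div_le_div_of_nonneg_right ?_ (by positivity)
    · linarith
  refine le_trans ?_ key
  apply div_le_div_of_nonneg_left hN0.le (by positivity)
  have hle1 : r ^ N ≤ Real.exp (k + 3) ^ N :=
    pow_le_pow_left₀ hr0.le h2.le N
  have hle2 : Real.log r ≤ (k : ℝ) + 3 := by
    rw [← Real.log_exp ((k : ℝ) + 3)]
    exact Real.log_le_log hr0 h2.le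
  have := mul_le_mul hle1 hle2 hlogpos.le (by positivity)
  linarith

end Aux

/-- For the smooth function `u` equal to `(|x|^(N/2) log|x|)⁻¹` for `|x| ≥ 3` and `0`
for `|x| ≤ 2`, the negative part of `u² log u²` has infinite integral, i.e.
`∫ u² log u² = −∞`. -/
theorem stmt_13 (N : ℕ) (hN : 2 ≤ N) (u : EuclideanSpace ℝ (Fin N) → ℝ)
    (hsmooth : ContDiff ℝ (⊤ : ℕ∞) u)
    (hout : ∀ x : EuclideanSpace ℝ (Fin N), 3 ≤ ‖x‖ →
      u x = (‖x‖ ^ ((N : ℝ) / 2) * Real.log ‖x‖)⁻¹)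
    (hin : ∀ x : EuclideanSpace ℝ (Fin N), ‖x‖ ≤ 2 → u x = 0) :
    ∫⁻ x : EuclideanSpace ℝ (Fin N),
        ENNReal.ofReal (-(u x ^ 2 * Real.log (u x ^ 2))) = ⊤ := by
  classical
  haveI : Nonempty (Fin N) := ⟨⟨0, by omega⟩⟩
  set μ : Measure (EuclideanSpace ℝ (Fin N)) := volume with hμ
  set B : ℝ≥0∞ := μ (Metric.ball (0 : EuclideanSpace ℝ (Fin N)) 1) with hB
  have hB0 : B ≠ 0 := (Metric.measure_ball_pos μ 0 one_pos).ne'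
  have hBtop : B ≠ ⊤ := measure_ball_lt_top.ne
  set A : ℕ → Set (EuclideanSpace ℝ (Fin N)) := fun k =>
    Metric.ball (0 : EuclideanSpace ℝ (Fin N)) (Real.exp (k + 3)) \ Metric.ball (0 : EuclideanSpace ℝ (Fin N)) (Real.exp (k + 2)) with hA
  have hAmeas : ∀ k, MeasurableSet (A k) :=
    fun k => measurableSet_ball.diff measurableSet_ball
  have hAmem : ∀ k (x : EuclideanSpace ℝ (Fin N)), x ∈ A k ↔
      Real.exp (k + 2) ≤ ‖x‖ ∧ ‖x‖ < Real.exp (k + 3) := by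
    intro k x
    simp [hA, Metric.mem_ball, dist_zero_right, not_lt, and_comm]
  have hAdisj : Pairwise (Function.onFun Disjoint A) := by
    have key : ∀ i j : ℕ, i < j → Disjoint (A i) (A j) := by
      intro i j hij
      rw [Set.disjoint_left]
      intro x hxi hxj
      rw [hAmem] at hxi hxj
      have h1 : ‖x‖ < Real.exp (i + 3) := hxi.2
      have h2 : Real.exp (j + 2) ≤ ‖x‖ := hxj.1
      have : Real.exp (i + 3) ≤ Real.exp (j + 2) := by
        apply Real.exp_le_exp.2
        have : (i : ℝ) + 1 ≤ j := by exact_mod_cast hij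
        linarith
      linarith
    intro i j hij
    rcases lt_or_gt_of_ne hij with h | h
    · exact key i j h
    · exact (key j i h).symm
  set F : EuclideanSpace ℝ (Fin N) → ℝ≥0∞ := fun x => ENNReal.ofReal (-(u x ^ 2 * Real.log (u x ^ 2))) with hF
  have hFmeas : Measurable F := by
    apply Measurable.ennreal_ofReal
    apply Measurable.neg
    exact ((hsmooth.continuous.measurable.pow_const 2)).mul
      (Real.measurable_log.comp (hsmooth.continuous.measurable.pow_const 2))
  -- finrank
  have hrank : Module.finrank ℝ (EuclideanSpace ℝ (Fin N)) = N := finrank_euclideanSpace_fin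
  -- measure of the annulus
  have hAvol : ∀ k : ℕ, μ (A k) =
      ENNReal.ofReal (Real.exp (k + 3) ^ N - Real.exp (k + 2) ^ N) * B := by
    intro k
    have hsub : Metric.ball (0 : EuclideanSpace ℝ (Fin N)) (Real.exp (k + 2)) ⊆
        Metric.ball (0 : EuclideanSpace ℝ (Fin N)) (Real.exp (k + 3)) := by
      apply Metric.ball_subset_ball
      apply Real.exp_le_exp.2; linarith
    rw [hA]
    rw [measure_diff hsub measurableSet_ball.nullMeasurableSet measure_ball_lt_top.ne]
    rw [Measure.addHaar_ball μ _ (Real.exp_pos _).le, Measure.addHaar_ball μ _ (Real.exp_pos _).le,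
      hrank, ← hB, ← ENNReal.sub_mul (fun _ _ => hBtop), ← ENNReal.ofReal_sub _ (by positivity)]
  -- lower bound on each annulus
  set c : ℕ → ℝ := fun k => (N : ℝ) / (Real.exp (k + 3) ^ N * (k + 3)) with hc
  have hannulus : ∀ k : ℕ,
      ENNReal.ofReal (c k) * μ (A k) ≤ ∫⁻ x in A k, F x ∂μ := by
    intro k
    have : ∫⁻ _ in A k, ENNReal.ofReal (c k) ∂μ ≤ ∫⁻ x in A k, F x ∂μ := by
      apply setLIntegral_mono hFmeas
      intro x hx
      rw [hAmem] at hx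
      apply ENNReal.ofReal_le_ofReal
      have h3 : (3 : ℝ) ≤ ‖x‖ := by
        refine le_trans ?_ hx.1
        calc (3 : ℝ) = 2 + 1 := by norm_num
        _ ≤ Real.exp 2 := Real.add_one_le_exp 2
        _ ≤ Real.exp (k + 2) := by
            apply Real.exp_le_exp.2; linarith [Nat.cast_nonneg (α := ℝ) k]
      rw [hout x h3]
      exact stmt13_pointwise N hN k hx.1 hx.2
    rwa [setLIntegral_const] at this
  -- the lower-bound constants
  set d : ℝ := (N : ℝ) * (1 - Real.exp (-(N : ℝ))) with hd
  have hd0 : 0 < d := by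
    have hN0' : (0 : ℝ) < N := by positivity
    have : Real.exp (-(N : ℝ)) < 1 := Real.exp_lt_one_iff.2 (by linarith)
    have hN0 : (0 : ℝ) < N := by positivity
    rw [hd]; nlinarith
  have hconst : ∀ k : ℕ, ENNReal.ofReal (c k) * μ (A k) =
      ENNReal.ofReal (d / (k + 3)) * B := by
    intro k
    rw [hAvol k, ← mul_assoc, ← ENNReal.ofReal_mul (by positivity)]
    congr 2
    have hexp : Real.exp (k + 2) ^ N = Real.exp (k + 3) ^ N * Real.exp (-(N : ℝ)) := by
      have : Real.exp ((k : ℝ) + 2) = Real.exp ((k : ℝ) + 3) * Real.exp (-1) := by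
        rw [← Real.exp_add]; ring_nf
      have h1 : Real.exp (-1 : ℝ) ^ N = Real.exp (-(N : ℝ)) := by
        rw [← Real.exp_nat_mul]; congr 1; push_cast; ring
      rw [this, mul_pow, h1]
    rw [hc, hd, hexp]
    have hek : (0 : ℝ) < Real.exp ((k : ℝ) + 3) ^ N := by positivity
    field_simp
  -- divergence of the harmonic-type series
  have hsum : (∑' k : ℕ, ENNReal.ofReal (d / (k + 3))) = ⊤ := by
    by_contra h
    have hsummable : Summable (fun k : ℕ => (d / ((k : ℝ) + 3)).toNNReal) := by
      rw [← ENNReal.tsum_coe_ne_top_iff_summable]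
      simpa [ENNReal.ofReal] using h
    have hs1 : Summable (fun k : ℕ => d / ((k : ℝ) + 3)) := by
      have := NNReal.summable_coe.2 hsummable
      refine this.congr fun k => ?_
      exact Real.coe_toNNReal _ (by positivity)
    have hs2 : Summable (fun k : ℕ => 1 / ((k : ℝ) + 3)) := by
      have := hs1.mul_left d⁻¹
      refine this.congr fun k => ?_
      field_simp
    have hs3 : Summable (fun n : ℕ => 1 / (n : ℝ)) := by
      rw [← summable_nat_add_iff 3]
      refine hs2.congr fun k => ?_
      push_cast; ring_nf
    exact Real.not_summable_one_div_natCast hs3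
  have hfinal : (⊤ : ℝ≥0∞) ≤ ∫⁻ x, F x ∂μ := by
    calc (⊤ : ℝ≥0∞) = (∑' k : ℕ, ENNReal.ofReal (d / (k + 3))) * B := by
          rw [hsum, ENNReal.top_mul hB0]
      _ = ∑' k : ℕ, ENNReal.ofReal (d / (k + 3)) * B := ENNReal.tsum_mul_right.symm
      _ = ∑' k : ℕ, ENNReal.ofReal (c k) * μ (A k) := by
          refine tsum_congr fun k => (hconst k).symm
      _ ≤ ∑' k : ℕ, ∫⁻ x in A k, F x ∂μ := ENNReal.tsum_le_tsum hannulus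
      _ = ∫⁻ x in ⋃ k, A k, F x ∂μ := (lintegral_iUnion hAmeas hAdisj _).symm
      _ ≤ ∫⁻ x, F x ∂μ := setLIntegral_le_lintegral _ _
  exact top_le_iff.1 hfinal
end
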